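/- With notation as in the main theorem (k even, n a multiple of k, f skew-symmetric homogeneous of degree (k/2)(n-1)), the hyperpfaffian expands as Pf(f(x_S))_{S ∈ binom([n],k)} = Σ_{ρ ∈ W_{n,k}} (-1)^ρ · c(ρ) · w(ρ), where W_{n,k} is the set of weighted oriented partitions of [n]: oriented partitions ρ = {C_1,...,C_{n/k}} with a composition w_i = (w(c_{i,1}),...,w(c_{i,k})) ∈ Γ_{n,k} assigned to each ordered block C_i = (c_{i,1},...,c_{i,k}); c(ρ) = Π_i a_{w_i} and w(ρ) = Π_i Π_j x_{c_{i,j}}^{w(c_{i,j})}. -/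

import Mathlib

/-!
Expanding `f` in monomials, skew-symmetry kills every monomial with a repeated exponent and
gives the coefficient of `x ^ (r ∘ τ⁻¹)` as `sign τ • a_r` for increasing `r`, so
`f = ∑_τ ∑_{r ∈ Γ} sign τ • a_r • ∏_j x_(τ j) ^ r_j`. Substituting this into every factor of the
term of a set partition and distributing turns that term into a sum over all orientations of its
blocks, with the sign of the resulting list of oriented blocks. Listing the oriented blocks by
their first elements, every oriented partition arises exactly once; as `k` is even, reordering the
blocks changes neither the sign nor, after relabelling the weights, the summand.
-/

open Finset Equiv MvPolynomial

open scoped Classical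

noncomputable section

/-- The position of the `j`-th element of the `i`-th block. -/
def bpos (m k : ℕ) (i : Fin m) (j : Fin k) : Fin (m * k) :=
  ⟨k * (i : ℕ) + (j : ℕ), by
    have hi := i.isLt
    have hj := j.isLt
    calc k * (i : ℕ) + (j : ℕ) < k * (i : ℕ) + k := by omega
      _ = k * ((i : ℕ) + 1) := by ring
      _ ≤ k * m := Nat.mul_le_mul_left k hi
      _ = m * k := Nat.mul_comm k m⟩

/-- Each block of the (oriented) partition is listed in increasing order. -/
def IsBlockMono (m k : ℕ) (π : Equiv.Perm (Fin (m * k))) : Prop :=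
  ∀ i : Fin m, StrictMono fun j : Fin k => π (bpos m k i j)

/-- The blocks are listed in increasing order of their first elements. -/
def IsLeadMono (m k : ℕ) (π : Equiv.Perm (Fin (m * k))) : Prop :=
  ∀ (i i' : Fin m) (j : Fin k), i < i' →
    π (bpos m k i ⟨0, j.pos⟩) < π (bpos m k i' ⟨0, j.pos⟩)

/-- Canonical representative of a set partition of `[n]`, `n = m*k`, into `m` blocks of
size `k`: each block increasing and blocks ordered by their minima. -/
def IsPartRep (m k : ℕ) (π : Equiv.Perm (Fin (m * k))) : Prop :=
  IsBlockMono m k π ∧ IsLeadMono m k π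

/-- A `k`-ary function is skew-symmetric. -/
def IsSkewFun {k : ℕ} {α R : Type*} [CommRing R] (f : (Fin k → α) → R) : Prop :=
  ∀ (σ : Equiv.Perm (Fin k)) (v : Fin k → α),
    f (v ∘ σ) = (Equiv.Perm.sign σ : ℤ) • f v

/-- The hyperpfaffian of a skew-symmetric `k`-ary function on `[m*k]`:
the signed sum over all set partitions of `[m*k]` into `m` blocks of size `k`. -/
def hyperPf (m k : ℕ) {R : Type*} [CommRing R]
    (f : (Fin k → Fin (m * k)) → R) : R :=
  ∑ π ∈ Finset.univ.filter (IsPartRep m k),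
    (Equiv.Perm.sign π : ℤ) • ∏ i : Fin m, f fun j => π (bpos m k i j)

/-- A polynomial in `k` variables is skew-symmetric. -/
def IsSkewPoly {k : ℕ} {R : Type*} [CommRing R] (f : MvPolynomial (Fin k) R) : Prop :=
  ∀ σ : Equiv.Perm (Fin k),
    MvPolynomial.rename (⇑σ) f = (Equiv.Perm.sign σ : ℤ) • f

/-- The hyperpfaffian `Pf (f(x_S))` of the values of a polynomial `f` in `k` variables
at the variables indexed by the `k`-subsets `S` of `[m*k]`. -/
def hyperPfPoly (m k : ℕ) {R : Type*} [CommRing R]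
    (f : MvPolynomial (Fin k) R) : MvPolynomial (Fin (m * k)) R :=
  ∑ π ∈ Finset.univ.filter (IsPartRep m k),
    (Equiv.Perm.sign π : ℤ) •
      ∏ i : Fin m, MvPolynomial.rename (fun j => π (bpos m k i j)) f

/-- The Vandermonde product. -/
def vand (n : ℕ) (R : Type*) [CommRing R] : MvPolynomial (Fin n) R :=
  ∏ p ∈ Finset.univ.filter (fun p : Fin n × Fin n => p.1 < p.2),
    (MvPolynomial.X p.2 - MvPolynomial.X p.1)

/-- The coefficient of `f` at the monomial with exponent vector `r`. -/
def coeffOf {k : ℕ} {R : Type*} [CommRing R] (f : MvPolynomial (Fin k) R)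
    (r : Fin k → ℕ) : R :=
  MvPolynomial.coeff (Finsupp.equivFunOnFinite.symm r) f

/-- Membership in `Γ_{n,k}`: a strictly increasing composition of `k/2*(n-1)`
into `k` distinct nonnegative parts. -/
def InGamma (n k : ℕ) (r : Fin k → ℕ) : Prop :=
  StrictMono r ∧ ∑ j, r j = k / 2 * (n - 1)

/-- Canonical representative of an element `β` of `R_{n,k}`, encoded as a permutation `e` of
`Fin (m*k)` (identified with `{0,…,n-1}`): the blocks of `e` are the compositions of `β`,
each block is increasing and sums to `k/2*(n-1)`, and the blocks are ordered canonically. -/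
def IsWeightRep (m k : ℕ) (e : Equiv.Perm (Fin (m * k))) : Prop :=
  IsPartRep m k e ∧
    ∀ i : Fin m, ∑ j : Fin k, ((e (bpos m k i j)) : ℕ) = k / 2 * (m * k - 1)

/-- The weight of the element `x` of `[m*k]` in the weighted oriented partition with
oriented partition (representative) `π` and weight vectors `w`. -/
def wtOf (m k : ℕ) (π : Equiv.Perm (Fin (m * k))) (w : Fin m → Fin k → ℕ) :
    Fin (m * k) → ℕ := fun x =>
  w ⟨((π.symm x : Fin (m*k)) : ℕ) / k, Nat.div_lt_of_lt_mul (lt_of_lt_of_le (π.symm x).isLt (le_of_eq (Nat.mul_comm m k)))⟩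
    ⟨((π.symm x : Fin (m*k)) : ℕ) % k, Nat.mod_lt _ (by
      have ht := (π.symm x).isLt
      have hk : k ≠ 0 := by rintro rfl; omega
      omega)⟩

end

open Equiv.Perm Function

section Sorting

variable {q : ℕ} {α : Type*} [LinearOrder α]

theorem Tuple.sort_eq_of_monotone_comp {u : Fin q → α} (hu : Injective u)
    {ε : Perm (Fin q)} (h : Monotone (u ∘ ε)) : Tuple.sort u = ε :=
  (Tuple.eq_sort_iff.mpr ⟨h, fun _ _ hij heq => absurd (hu heq) (ε.injective.ne hij.ne)⟩).symm

theorem Tuple.sort_comp_perm {u : Fin q → α} (hu : Injective u) (c : Perm (Fin q)) :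
    Tuple.sort (u ∘ c) = c⁻¹ * Tuple.sort u :=
  Tuple.sort_eq_of_monotone_comp (hu.comp c.injective) <| by
    simpa [comp_def] using Tuple.monotone_sort u

theorem sum_filter_injective_eq_sum_perm_sum_strictMono {M : Type*} [AddCommMonoid M] [Fintype α]
    [DecidableEq α] (p : (Fin q → α) → Prop) [DecidablePred p]
    (hp : ∀ D (τ : Perm (Fin q)), p (D ∘ τ) ↔ p D)
    (F : (Fin q → α) → M) :
    ∑ D ∈ univ.filter (fun D => Injective D ∧ p D), F D =
      ∑ τ : Perm (Fin q), ∑ r ∈ univ.filter (fun r => StrictMono r ∧ p r), F (r ∘ ⇑τ⁻¹) := by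
  rw [← sum_product']
  symm
  refine sum_nbij' (fun x => x.2 ∘ ⇑x.1⁻¹) (fun D => (Tuple.sort D, D ∘ Tuple.sort D))
    ?_ ?_ ?_ ?_ (fun _ _ => rfl)
  · simp only [mem_product, mem_univ, mem_filter, true_and, and_imp, Prod.forall]
    exact fun τ r hr hpr => ⟨hr.injective.comp τ⁻¹.injective, (hp r τ⁻¹).mpr hpr⟩
  · simp only [mem_product, mem_univ, mem_filter, true_and, and_imp]
    exact fun D hD hpD => ⟨(Tuple.monotone_sort D).strictMono_of_injective
      (hD.comp (Tuple.sort D).injective), (hp D _).mpr hpD⟩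
  · simp only [mem_product, mem_univ, mem_filter, true_and, and_imp, Prod.forall, Prod.mk.injEq]
    intro τ r hr _
    have hsort : Tuple.sort (r ∘ ⇑τ⁻¹) = τ :=
      Tuple.sort_eq_of_monotone_comp (hr.injective.comp τ⁻¹.injective) (by
        simpa [comp_def] using hr.monotone)
    exact ⟨hsort, funext fun j => by rw [comp_apply, hsort]; simp⟩
  · intro D _
    ext; simp

end Sorting

section SkewPoly

variable {k : ℕ} {R : Type*} [CommRing R] {f : MvPolynomial (Fin k) R}

theorem coeffOf_comp_perm (hskew : IsSkewPoly f) (r : Fin k → ℕ) (ε : Perm (Fin k)) :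
    coeffOf f (r ∘ ε) = (sign ε : ℤ) * coeffOf f r := by
  have h := coeff_rename_mapDomain (⇑ε) ε.injective f (Finsupp.equivFunOnFinite.symm (r ∘ ε))
  have hmap : Finsupp.mapDomain ε (Finsupp.equivFunOnFinite.symm (r ∘ ε)) =
      Finsupp.equivFunOnFinite.symm r := by
    ext x
    obtain ⟨y, rfl⟩ := ε.surjective x
    simp [Finsupp.mapDomain_apply ε.injective]
  rw [hskew ε, coeff_smul, hmap, zsmul_eq_mul] at h
  exact h.symm

theorem coeffOf_eq_zero_of_not_injective [IsAddTorsionFree R] (hskew : IsSkewPoly f)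
    {r : Fin k → ℕ} (hr : ¬ Injective r) : coeffOf f r = 0 := by
  obtain ⟨a, b, hab, hne⟩ : ∃ a b, r a = r b ∧ a ≠ b := by
    simpa [Injective] using hr
  have hswap : r ∘ swap a b = r := by
    funext x
    rcases eq_or_ne x a with rfl | hxa
    · simp [hab]
    rcases eq_or_ne x b with rfl | hxb
    · simp [hab]
    · simp [swap_apply_of_ne_of_ne hxa hxb]
  have h := coeffOf_comp_perm hskew r (swap a b)
  rw [hswap, sign_swap hne] at h
  refine two_nsmul_eq_zero.mp ?_
  rw [two_nsmul]
  push_cast at h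
  linear_combination h

theorem coeffOf_eq_zero_of_sum_ne {d : ℕ} (hhom : f.IsHomogeneous d) {r : Fin k → ℕ}
    (hr : ∑ j, r j ≠ d) : coeffOf f r = 0 :=
  hhom.coeff_eq_zero (by rwa [Finsupp.degree_eq_sum])

/-- Homogeneity bounds every exponent by `d`, so exponent vectors can be taken in `Fin (d + 1)`. -/
theorem eq_sum_coeffOf_mul_prod_X_pow {d : ℕ} (hhom : f.IsHomogeneous d) :
    f = ∑ D : Fin k → Fin (d + 1), C (coeffOf f fun j => (D j : ℕ)) * ∏ j, X j ^ (D j : ℕ) := by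
  set e : (Fin k → Fin (d + 1)) → (Fin k →₀ ℕ) :=
    fun D => Finsupp.equivFunOnFinite.symm fun j => (D j : ℕ)
  have he : Injective e := fun D D' h => funext fun j => Fin.ext (DFunLike.congr_fun h j)
  have hsupp : f.support ⊆ univ.image e := by
    intro s hs
    have hdeg : ∑ j, s j = d := by
      by_contra h
      exact mem_support_iff.mp hs (hhom.coeff_eq_zero (by rwa [Finsupp.degree_eq_sum]))
    refine mem_image.mpr ⟨fun j => ⟨s j, ?_⟩, mem_univ _, by ext; rfl⟩
    exact Nat.lt_succ_of_le (hdeg ▸ single_le_sum (fun _ _ => Nat.zero_le _) (mem_univ j))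
  conv_lhs => rw [f.as_sum]
  rw [sum_subset hsupp fun s _ hs => by rw [notMem_support_iff.mp hs, monomial_zero],
    sum_image fun D _ D' _ h => he h]
  refine sum_congr rfl fun D _ => ?_
  rw [monomial_eq, Finsupp.prod_fintype _ _ fun _ => pow_zero _]
  rfl

noncomputable def gammaSet (n k : ℕ) : Finset (Fin k → Fin (k / 2 * (n - 1) + 1)) :=
  univ.filter fun r => InGamma n k fun j => (r j : ℕ)

theorem IsSkewPoly.eq_sum_gammaSet [IsAddTorsionFree R] {n : ℕ} (hskew : IsSkewPoly f)
    (hhom : f.IsHomogeneous (k / 2 * (n - 1))) :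
    f = ∑ τ : Perm (Fin k), ∑ r ∈ gammaSet n k,
      (sign τ : ℤ) • (C (coeffOf f fun j => (r j : ℕ)) * ∏ j, X (τ j) ^ (r j : ℕ)) := by
  set d := k / 2 * (n - 1)
  set p : (Fin k → Fin (d + 1)) → Prop := fun D => ∑ j, (D j : ℕ) = d
  have hp (D : Fin k → Fin (d + 1)) (τ : Perm (Fin k)) : p (D ∘ τ) ↔ p D := by
    simp only [p, comp_apply, Equiv.sum_comp τ fun j => (D j : ℕ)]
  have hzero (D : Fin k → Fin (d + 1)) (hD : ¬ (Injective D ∧ p D)) :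
      coeffOf f (fun j => (D j : ℕ)) = 0 := (not_and_or.mp hD).elim
    (fun h => coeffOf_eq_zero_of_not_injective hskew fun h' => h h'.of_comp)
    (coeffOf_eq_zero_of_sum_ne hhom)
  calc f = ∑ D : Fin k → Fin (d + 1), C (coeffOf f fun j => (D j : ℕ)) * ∏ j, X j ^ (D j : ℕ) :=
        eq_sum_coeffOf_mul_prod_X_pow hhom
    _ = ∑ D ∈ univ.filter (fun D => Injective D ∧ p D),
          C (coeffOf f fun j => (D j : ℕ)) * ∏ j, X j ^ (D j : ℕ) :=
        (sum_subset (filter_subset _ _) fun D _ hD => by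
          rw [hzero D (by simpa using hD), C_0, zero_mul]).symm
    _ = ∑ τ : Perm (Fin k), ∑ r ∈ univ.filter (fun r => StrictMono r ∧ p r),
          C (coeffOf f fun j => (r (τ⁻¹ j) : ℕ)) * ∏ j, X j ^ (r (τ⁻¹ j) : ℕ) :=
        sum_filter_injective_eq_sum_perm_sum_strictMono p hp _
    _ = _ := by
      refine sum_congr rfl fun τ _ => sum_congr ?_ fun r _ => ?_
      · ext r
        simp only [gammaSet, mem_filter, mem_univ, true_and]
        rfl
      · rw [show (fun j => (r (τ⁻¹ j) : ℕ)) = (fun j => (r j : ℕ)) ∘ ⇑τ⁻¹ from rfl,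
          coeffOf_comp_perm hskew, sign_inv, zsmul_eq_mul, ← Equiv.prod_comp τ]
        simp [mul_assoc]

end SkewPoly

section Blocks

variable {m k : ℕ}

theorem bpos_eq_finProdFinEquiv (i : Fin m) (j : Fin k) : bpos m k i j = finProdFinEquiv (i, j) :=
  Fin.ext (Nat.add_comm _ _)

theorem bpos_inj {i i' : Fin m} {j j' : Fin k} :
    bpos m k i j = bpos m k i' j' ↔ i = i' ∧ j = j' := by
  simp [bpos_eq_finProdFinEquiv]

theorem Equiv.Perm.ext_bpos {π π' : Perm (Fin (m * k))}
    (h : ∀ i j, π (bpos m k i j) = π' (bpos m k i j)) : π = π' := by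
  ext1 x
  obtain ⟨⟨i, j⟩, rfl⟩ := finProdFinEquiv.surjective x
  simp only [← bpos_eq_finProdFinEquiv, h]

noncomputable def blockPerm (b : Perm (Fin m)) (s : Fin m → Perm (Fin k)) : Perm (Fin (m * k)) :=
  finProdFinEquiv.permCongr (prodCongrLeft (fun _ => b) * prodCongrRight s)

@[simp]
theorem blockPerm_bpos (b : Perm (Fin m)) (s : Fin m → Perm (Fin k)) (i : Fin m) (j : Fin k) :
    blockPerm b s (bpos m k i j) = bpos m k (b i) (s i j) := by
  simp [blockPerm, bpos_eq_finProdFinEquiv, permCongr_apply]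

theorem blockPerm_mul (b b' : Perm (Fin m)) (s s' : Fin m → Perm (Fin k)) :
    blockPerm b s * blockPerm b' s' = blockPerm (b * b') fun i => s (b' i) * s' i :=
  Perm.ext_bpos fun i j => by simp

@[simp]
theorem blockPerm_one : blockPerm (1 : Perm (Fin m)) (fun _ => (1 : Perm (Fin k))) = 1 :=
  Perm.ext_bpos fun i j => by simp

theorem sign_blockPerm (b : Perm (Fin m)) (s : Fin m → Perm (Fin k)) :
    sign (blockPerm b s) = sign b ^ k * ∏ i, sign (s i) := by
  simp [blockPerm, sign_permCongr, sign_prodCongrLeft, sign_prodCongrRight]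

def block (π : Perm (Fin (m * k))) (i : Fin m) : Fin k → Fin (m * k) :=
  fun j => π (bpos m k i j)

theorem block_mul_blockPerm (π : Perm (Fin (m * k))) (b : Perm (Fin m))
    (s : Fin m → Perm (Fin k)) (i : Fin m) :
    block (π * blockPerm b s) i = block π (b i) ∘ s i :=
  funext fun j => by simp [block]

theorem block_inj {π : Perm (Fin (m * k))} {i i' : Fin m} {j j' : Fin k} :
    block π i j = block π i' j' ↔ i = i' ∧ j = j' :=
  π.injective.eq_iff.trans bpos_inj

theorem block_injective (π : Perm (Fin (m * k))) (i : Fin m) : Injective (block π i) :=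
  fun _ _ h => (block_inj.mp h).2

end Blocks

section NormalForms

variable {m k : ℕ}

noncomputable def blockSort (π : Perm (Fin (m * k))) : Perm (Fin (m * k)) :=
  π * blockPerm 1 fun i => Tuple.sort (block π i)

theorem isBlockMono_blockSort (π : Perm (Fin (m * k))) : IsBlockMono m k (blockSort π) := by
  intro i
  show StrictMono (block (blockSort π) i)
  rw [blockSort, block_mul_blockPerm]
  exact (Tuple.monotone_sort _).strictMono_of_injective
    ((block_injective π _).comp (Equiv.injective _))

theorem blockSort_mul_blockPerm (π : Perm (Fin (m * k))) (c : Perm (Fin m)) :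
    blockSort (π * blockPerm c 1) = blockSort π * blockPerm c 1 := by
  simp only [blockSort, block_mul_blockPerm, mul_assoc, blockPerm_mul]
  simp

theorem blockSort_mul_blockPerm_inv (π : Perm (Fin (m * k))) :
    blockSort π * blockPerm 1 (fun i => (Tuple.sort (block π i))⁻¹) = π := by
  simp [blockSort, mul_assoc, blockPerm_mul]

theorem sort_block_mul_blockPerm {π : Perm (Fin (m * k))} (hπ : IsBlockMono m k π)
    (σ : Fin m → Perm (Fin k)) (i : Fin m) :
    Tuple.sort (block (π * blockPerm 1 σ) i) = (σ i)⁻¹ := by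
  rw [block_mul_blockPerm, Tuple.sort_comp_perm (block_injective π _),
    Tuple.sort_eq_of_monotone_comp (block_injective π _) (ε := 1) (hπ _).monotone]
  simp

theorem blockSort_mul_blockPerm_of_isBlockMono {π : Perm (Fin (m * k))} (hπ : IsBlockMono m k π)
    (σ : Fin m → Perm (Fin k)) : blockSort (π * blockPerm 1 σ) = π := by
  simp [blockSort, sort_block_mul_blockPerm hπ, mul_assoc, blockPerm_mul]

end NormalForms

section SortBlocks

variable {m k : ℕ} {α : Type*} [LinearOrder α] (key : Perm (Fin (m * k)) → Fin m → α)

noncomputable def sortBlocksBy (π : Perm (Fin (m * k))) : Perm (Fin (m * k)) :=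
  π * blockPerm (Tuple.sort (key π)) 1

variable {key}

theorem sortBlocksBy_mul_blockPerm (hkey : ∀ π c, key (π * blockPerm c 1) = key π ∘ c)
    (hinj : ∀ π, Injective (key π)) (π : Perm (Fin (m * k))) (c : Perm (Fin m)) :
    sortBlocksBy key (π * blockPerm c 1) = sortBlocksBy key π := by
  rw [sortBlocksBy, sortBlocksBy, hkey, Tuple.sort_comp_perm (hinj π), mul_assoc, blockPerm_mul]
  simp [Pi.one_def]

theorem sortBlocksBy_eq_self {π : Perm (Fin (m * k))} (h : Monotone (key π)) :
    sortBlocksBy key π = π := by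
  rw [sortBlocksBy, show Tuple.sort (key π) = 1 from Tuple.sort_eq_refl_iff_monotone.mpr h]
  simp [Pi.one_def]

theorem monotone_key_sortBlocksBy (hkey : ∀ π c, key (π * blockPerm c 1) = key π ∘ c)
    (π : Perm (Fin (m * k))) : Monotone (key (sortBlocksBy key π)) := by
  rw [sortBlocksBy, hkey]
  exact Tuple.monotone_sort _

end SortBlocks

section Leaders

variable {m k : ℕ} (hk : 0 < k)

def leaders (π : Perm (Fin (m * k))) : Fin m → Fin (m * k) :=
  fun i => block π i ⟨0, hk⟩

theorem leaders_mul_blockPerm (π : Perm (Fin (m * k))) (c : Perm (Fin m)) :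
    leaders hk (π * blockPerm c 1) = leaders hk π ∘ c :=
  funext fun i => by simp [leaders, block_mul_blockPerm]

theorem leaders_injective (π : Perm (Fin (m * k))) : Injective (leaders hk π) :=
  fun _ _ h => (block_inj.mp h).1

theorem isLeadMono_iff_monotone_leaders {π : Perm (Fin (m * k))} :
    IsLeadMono m k π ↔ Monotone (leaders hk π) :=
  ⟨fun h => (show StrictMono (leaders hk π) from fun i i' hii' => h i i' ⟨0, hk⟩ hii').monotone,
    fun h _ _ _ hii' => (h.strictMono_of_injective (leaders_injective hk π)) hii'⟩

end Leaders

section Transversal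

variable {m k : ℕ} {M : Type*} [AddCommMonoid M]

theorem sum_isPartRep_eq_sum_isLeadMono (T : Perm (Fin (m * k)) → M)
    (hT : ∀ π b, T (π * blockPerm b 1) = T π) :
    ∑ π₀ ∈ univ.filter (IsPartRep m k), ∑ σ : Fin m → Perm (Fin k), T (π₀ * blockPerm 1 σ) =
      ∑ π ∈ univ.filter (IsLeadMono m k), T π := by
  rcases Nat.eq_zero_or_pos k with rfl | hk
  · have : Subsingleton (Perm (Fin (m * 0))) := by rw [Nat.mul_zero]; infer_instance
    have hPart (π : Perm (Fin (m * 0))) : IsPartRep m 0 π :=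
      ⟨fun _ => Subsingleton.strictMono _, fun _ _ j => j.elim0⟩
    rw [filter_true_of_mem fun π _ => hPart π, filter_true_of_mem fun π _ => (hPart π).2]
    exact sum_congr rfl fun π _ => by rw [Fintype.sum_unique, Subsingleton.elim (π * _) π]
  set minKey : Perm (Fin (m * k)) → Fin m → Fin (m * k) := fun π => leaders hk (blockSort π)
  have hminKey (π : Perm (Fin (m * k))) (c : Perm (Fin m)) :
      minKey (π * blockPerm c 1) = minKey π ∘ c := by
    simp only [minKey, blockSort_mul_blockPerm, leaders_mul_blockPerm]
  have hleadSort (π : Perm (Fin (m * k))) (c : Perm (Fin m)) :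
      sortBlocksBy (leaders hk) (π * blockPerm c 1) = sortBlocksBy (leaders hk) π :=
    sortBlocksBy_mul_blockPerm (leaders_mul_blockPerm hk) (leaders_injective hk) π c
  have hminSort (π : Perm (Fin (m * k))) (c : Perm (Fin m)) :
      sortBlocksBy minKey (π * blockPerm c 1) = sortBlocksBy minKey π :=
    sortBlocksBy_mul_blockPerm hminKey (fun _ => leaders_injective hk _) π c
  rw [← sum_product']
  -- `(π₀, σ)` goes to `π₀` with block `i` reordered by `σ i` and the blocks listed by their first
  -- elements; the inverse lists the blocks by their minima and then sorts each block.
  refine sum_nbij' (fun p => sortBlocksBy (leaders hk) (p.1 * blockPerm 1 p.2))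
    (fun π => (blockSort (sortBlocksBy minKey π),
      fun i => (Tuple.sort (block (sortBlocksBy minKey π) i))⁻¹)) ?_ ?_ ?_ ?_ ?_
  · intro p _
    simpa using (isLeadMono_iff_monotone_leaders hk).mpr
      (monotone_key_sortBlocksBy (leaders_mul_blockPerm hk) _)
  · intro π _
    simpa [IsPartRep] using ⟨isBlockMono_blockSort _,
      (isLeadMono_iff_monotone_leaders hk).mpr (monotone_key_sortBlocksBy hminKey π)⟩
  · rintro ⟨π₀, σ⟩ hp
    simp only [mem_product, mem_filter, mem_univ, true_and, and_true] at hp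
    have hminSort_eq : sortBlocksBy minKey (sortBlocksBy (leaders hk) (π₀ * blockPerm 1 σ)) =
        π₀ * blockPerm 1 σ := by
      refine (hminSort _ _).trans (sortBlocksBy_eq_self ?_)
      simp only [minKey, blockSort_mul_blockPerm_of_isBlockMono hp.1]
      exact (isLeadMono_iff_monotone_leaders hk).mp hp.2
    simp [hminSort_eq, blockSort_mul_blockPerm_of_isBlockMono hp.1, sort_block_mul_blockPerm hp.1]
  · intro π hπ
    simp only [mem_filter, mem_univ, true_and] at hπ
    rw [blockSort_mul_blockPerm_inv]
    exact (hleadSort _ _).trans (sortBlocksBy_eq_self ((isLeadMono_iff_monotone_leaders hk).mp hπ))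
  · intro p _
    exact (hT _ _).symm

end Transversal

section Weightings

variable {m k : ℕ} {R : Type*} [CommRing R]

noncomputable def weightingSum (f : MvPolynomial (Fin k) R) (π : Perm (Fin (m * k))) :
    MvPolynomial (Fin (m * k)) R :=
  ∑ w ∈ univ.filter (fun w : Fin m → Fin k → Fin (k / 2 * (m * k - 1) + 1) =>
      ∀ i, InGamma (m * k) k fun j => (w i j : ℕ)),
    (sign π : ℤ) • (C (∏ i, coeffOf f fun j => (w i j : ℕ)) *
      ∏ i, ∏ j, X (π (bpos m k i j)) ^ (w i j : ℕ))

theorem weightingSum_mul_blockPerm (hk : Even k) (f : MvPolynomial (Fin k) R)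
    (π : Perm (Fin (m * k))) (b : Perm (Fin m)) :
    weightingSum f (π * blockPerm b 1) = weightingSum f π := by
  have hsign : sign (π * blockPerm b 1) = sign π := by
    obtain ⟨c, rfl⟩ := hk
    simp [sign_blockPerm, ← two_mul, pow_mul, Int.units_sq]
  refine sum_equiv (b.arrowCongr (Equiv.refl _)) (fun w => ?_) fun w _ => ?_
  · simp only [mem_filter, mem_univ, true_and, arrowCongr_apply, coe_refl, CompTriple.comp_eq]
    exact b.symm.forall_congr_right.symm
  · simp only [hsign, arrowCongr_apply, coe_refl, CompTriple.comp_eq]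
    congr 2
    · exact congrArg C (Equiv.prod_comp b.symm fun i => coeffOf f fun j => (w i j : ℕ)).symm
    · rw [← Equiv.prod_comp b fun i => ∏ j, X (π (bpos m k i j)) ^ ((w ∘ b.symm) i j : ℕ)]
      simp

end Weightings

section Expansion

variable {m k : ℕ} {R : Type*} [CommRing R] [IsAddTorsionFree R] {f : MvPolynomial (Fin k) R}

theorem sign_smul_prod_rename_eq_sum_weightingSum (hskew : IsSkewPoly f)
    (hhom : f.IsHomogeneous (k / 2 * (m * k - 1))) (π₀ : Perm (Fin (m * k))) :
    (sign π₀ : ℤ) • ∏ i, rename (fun j => π₀ (bpos m k i j)) f =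
      ∑ σ : Fin m → Perm (Fin k), weightingSum f (π₀ * blockPerm 1 σ) := by
  have hblock (i : Fin m) : rename (fun j => π₀ (bpos m k i j)) f =
      ∑ τ : Perm (Fin k), ∑ r ∈ gammaSet (m * k) k, (sign τ : ℤ) •
        (C (coeffOf f fun j => (r j : ℕ)) * ∏ j, X (π₀ (bpos m k i (τ j))) ^ (r j : ℕ)) := by
    conv_lhs => rw [hskew.eq_sum_gammaSet hhom]
    simp [map_sum, map_prod]
  rw [prod_congr rfl fun i _ => hblock i, prod_univ_sum, Fintype.piFinset_univ, smul_sum]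
  refine sum_congr rfl fun σ _ => ?_
  rw [prod_univ_sum, weightingSum, smul_sum]
  refine sum_congr ?_ fun w _ => ?_
  · ext w
    simp [gammaSet, Fintype.mem_piFinset]
  · simp only [zsmul_eq_mul, prod_mul_distrib, Perm.sign_mul, sign_blockPerm, Perm.sign_one,
      one_pow, one_mul, Units.val_mul, Units.coe_prod, map_prod, Perm.coe_mul, comp_apply,
      blockPerm_bpos, Perm.coe_one, id_eq, Int.cast_mul, Int.cast_prod]
    ring

end Expansion

theorem stmt7 (m k : ℕ) (hk : Even k) (R : Type*) [Field R] [CharZero R]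
    (f : MvPolynomial (Fin k) R)
    (hhom : f.IsHomogeneous (k / 2 * (m * k - 1)))
    (hskew : IsSkewPoly f) :
    hyperPfPoly m k f =
      ∑ π ∈ Finset.univ.filter (IsLeadMono m k),
        ∑ w ∈ Finset.univ.filter
            (fun w : Fin m → Fin k → Fin (k / 2 * (m * k - 1) + 1) =>
              ∀ i : Fin m, InGamma (m * k) k fun j => (w i j : ℕ)),
          (Equiv.Perm.sign π : ℤ) •
            (MvPolynomial.C (∏ i : Fin m, coeffOf f fun j => (w i j : ℕ)) *
              ∏ i : Fin m, ∏ j : Fin k,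
                (MvPolynomial.X (π (bpos m k i j)) : MvPolynomial (Fin (m * k)) R)
                  ^ ((w i j : ℕ))) := by
  rw [hyperPfPoly]
  exact (sum_congr rfl fun π₀ _ => sign_smul_prod_rename_eq_sum_weightingSum hskew hhom π₀).trans
    (sum_isPartRep_eq_sum_isLeadMono _ (weightingSum_mul_blockPerm hk f))
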